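/- (Theorem: Regime 2 slow convergence bound) Consider the gradient flow dθ_i/dt = π_i(θ)(p_i − A(θ)) with π = softmax(θ) on a finite index set R. Let r* be the unique maximizer of p and r' the unique second-best index, and suppose p(r') > A(θ(0)) > p(r) for all r ∉ {r*, r'}. Define Δ = p(r*) − p(r'), γ = Σ_{r ≠ r'} π_{θ(0)}(r)/π_{θ(0)}(r*), C_2 = 1/Δ, C_1 = p(r')/Δ, and T_0 = (1/(2 − 2π_{θ(0)}(r'))) ((C_1 γ)^{2 C_2 γ} − 1). Then for all t ≥ T_0, A(θ(t)) ≥ p(r') > p(r) for all r ∉ {r*, r'}. -/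

import Mathlib

open Finset

noncomputable def softmax {n : ℕ} (θ : Fin n → ℝ) (i : Fin n) : ℝ :=
  Real.exp (θ i) / ∑ k, Real.exp (θ k)

lemma sum_exp_pos {n : ℕ} (θ : Fin n → ℝ) (i : Fin n) : 0 < ∑ k, Real.exp (θ k) :=
  Finset.sum_pos (fun k _ => Real.exp_pos _) ⟨i, mem_univ i⟩

lemma softmax_pos {n : ℕ} (θ : Fin n → ℝ) (i : Fin n) : 0 < softmax θ i :=
  div_pos (Real.exp_pos _) (sum_exp_pos θ i)

lemma softmax_lt_one {n : ℕ} (θ : Fin n → ℝ) (i j : Fin n) (hij : i ≠ j) :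
    softmax θ i < 1 := by
  rw [softmax, div_lt_one (sum_exp_pos θ i)]
  calc Real.exp (θ i) < Real.exp (θ i) + Real.exp (θ j) := by
        linarith [Real.exp_pos (θ j)]
    _ ≤ ∑ k, Real.exp (θ k) := by
        classical
        have h1 : ({i, j} : Finset (Fin n)) ⊆ univ := subset_univ _
        have h2 : ∑ k ∈ ({i, j} : Finset (Fin n)), Real.exp (θ k)
            = Real.exp (θ i) + Real.exp (θ j) := by
          rw [Finset.sum_pair hij]
        rw [← h2]
        exact Finset.sum_le_sum_of_subset_of_nonneg h1
          (fun k _ _ => (Real.exp_pos _).le)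

lemma softmax_mul_exp_sub {n : ℕ} (θ : Fin n → ℝ) (i j : Fin n) :
    softmax θ i * Real.exp (θ j - θ i) = softmax θ j := by
  rw [softmax, softmax, Real.exp_sub]
  have h1 : Real.exp (θ i) ≠ 0 := (Real.exp_pos _).ne'
  field_simp

lemma hasDerivAt_softmax {n : ℕ} {θ : ℝ → Fin n → ℝ} {d : Fin n → ℝ} {t : ℝ}
    (hθ : ∀ i, HasDerivAt (fun s => θ s i) (d i) t) (j : Fin n) :
    HasDerivAt (fun s => softmax (θ s) j)
      (softmax (θ t) j * (d j - ∑ k, softmax (θ t) k * d k)) t := by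
  have hE : ∀ i : Fin n, HasDerivAt (fun s => Real.exp (θ s i))
      (Real.exp (θ t i) * d i) t := fun i => (hθ i).exp
  have hS : HasDerivAt (fun s => ∑ k, Real.exp (θ s k))
      (∑ k, Real.exp (θ t k) * d k) t := HasDerivAt.fun_sum (fun i _ => hE i)
  have hSpos : 0 < ∑ k, Real.exp (θ t k) := sum_exp_pos _ j
  have h := (hE j).fun_div hS hSpos.ne'
  convert h using 1
  · rfl
  · rfl
  · rfl
  rw [softmax]
  have : ∀ k, softmax (θ t) k * d k
      = Real.exp (θ t k) * d k / ∑ l, Real.exp (θ t l) := by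
    intro k; rw [softmax]; ring
  rw [Finset.sum_congr rfl (fun k _ => this k), ← Finset.sum_div]
  field_simp

lemma antitoneOn_Icc_of_hasDerivAt {f f' : ℝ → ℝ} {a b : ℝ}
    (hd : ∀ s ∈ Set.Icc a b, HasDerivAt f (f' s) s)
    (h0 : ∀ s ∈ Set.Ioo a b, f' s ≤ 0) : AntitoneOn f (Set.Icc a b) := by
  apply antitoneOn_of_deriv_nonpos (convex_Icc a b)
  · exact fun s hs => (hd s hs).continuousAt.continuousWithinAt
  · intro s hs
    rw [interior_Icc] at hs
    exact (hd s (Set.mem_Icc_of_Ioo hs)).differentiableAt.differentiableWithinAt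
  · intro s hs
    rw [interior_Icc] at hs
    rw [(hd s (Set.mem_Icc_of_Ioo hs)).deriv]
    exact h0 s hs

lemma monotoneOn_Ici_of_hasDerivAt {f f' : ℝ → ℝ}
    (hd : ∀ s ∈ Set.Ici (0:ℝ), HasDerivAt f (f' s) s)
    (h0 : ∀ s ∈ Set.Ici (0:ℝ), 0 ≤ f' s) : MonotoneOn f (Set.Ici (0:ℝ)) := by
  apply monotoneOn_of_deriv_nonneg (convex_Ici 0)
  · exact fun s hs => (hd s hs).continuousAt.continuousWithinAt
  · intro s hs
    rw [interior_Ici] at hs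
    exact (hd s (Set.mem_Ici.mpr (le_of_lt hs))).differentiableAt.differentiableWithinAt
  · intro s hs
    rw [interior_Ici] at hs
    rw [(hd s (Set.mem_Ici.mpr (le_of_lt hs))).deriv]
    exact h0 s (Set.mem_Ici.mpr (le_of_lt hs))

lemma sq_sum_le {n : ℕ} (f : Fin n → ℝ) (s : Finset (Fin n)) (hf : ∀ k ∈ s, 0 ≤ f k) :
    ∑ k ∈ s, (f k)^2 ≤ (∑ k ∈ s, f k)^2 := by
  rw [sq (∑ k ∈ s, f k), Finset.sum_mul_sum]
  calc ∑ k ∈ s, (f k)^2 = ∑ k ∈ s, f k * f k := by simp [sq]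
    _ ≤ ∑ i ∈ s, ∑ j ∈ s, f i * f j := by
        apply Finset.sum_le_sum
        intro k hk
        have : f k * f k = ∑ j ∈ ({k} : Finset (Fin n)), f k * f j := by simp
        rw [this]
        exact Finset.sum_le_sum_of_subset_of_nonneg (by simpa using hk)
          (fun j hj _ => mul_nonneg (hf k hk) (hf j hj))

set_option maxHeartbeats 2000000 in
theorem regime2_slow_convergence {n : ℕ}
    (p : Fin n → ℝ) (hp : ∀ i, p i ∈ Set.Icc (0 : ℝ) 1)
    (rstar rprime : Fin n) (hne : rprime ≠ rstar)
    (hmax : ∀ r, r ≠ rstar → p r < p rstar)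
    (hsecond : ∀ r, r ≠ rstar → r ≠ rprime → p r < p rprime)
    (θ : ℝ → Fin n → ℝ)
    (hflow : ∀ t, 0 ≤ t → ∀ i, HasDerivAt (fun s => θ s i)
      (softmax (θ t) i * (p i - ∑ j, softmax (θ t) j * p j)) t)
    (hinit_lt : ∑ j, softmax (θ 0) j * p j < p rprime)
    (hinit_gt : ∀ r, r ≠ rstar → r ≠ rprime →
      p r < ∑ j, softmax (θ 0) j * p j)
    (Δ γ C₁ C₂ T₀ : ℝ)
    (hΔ : Δ = p rstar - p rprime)
    (hγ : γ = ∑ r ∈ Finset.univ.erase rprime, softmax (θ 0) r / softmax (θ 0) rstar)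
    (hC₂ : C₂ = 1 / Δ) (hC₁ : C₁ = p rprime / Δ)
    (hT₀ : T₀ = (1 / (2 - 2 * softmax (θ 0) rprime)) *
      ((C₁ * γ) ^ (2 * C₂ * γ) - 1)) :
    ∀ t, T₀ ≤ t →
      p rprime ≤ ∑ j, softmax (θ t) j * p j ∧
      ∀ r, r ≠ rstar → r ≠ rprime → p r < p rprime := by
  classical
  -- abbreviations
  set A : ℝ → ℝ := fun s => ∑ j, softmax (θ s) j * p j with hAdef
  set D : ℝ → Fin n → ℝ := fun s i => softmax (θ s) i * (p i - A s) with hDdef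
  -- basic facts
  have hπpos : ∀ s (j : Fin n), 0 < softmax (θ s) j := fun s j => softmax_pos _ j
  have hsum1 : ∀ s, ∑ j, softmax (θ s) j = 1 := by
    intro s
    have h0 : (0:ℝ) < ∑ k, Real.exp (θ s k) := sum_exp_pos _ rprime
    simp only [softmax, ← Finset.sum_div]
    exact div_self h0.ne'
  have hΔpos : 0 < Δ := by
    rw [hΔ]; linarith [hmax rprime hne]
  have hAnonneg : ∀ s, 0 ≤ A s := by
    intro s
    exact Finset.sum_nonneg fun j _ => mul_nonneg (hπpos s j).le (hp j).1
  have hp'pos : 0 < p rprime := lt_of_le_of_lt (hAnonneg 0) hinit_lt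
  have hp'le1 : p rprime ≤ 1 := (hp rprime).2
  have hπ'lt1 : ∀ s, softmax (θ s) rprime < 1 := fun s => softmax_lt_one _ _ _ hne
  have hw0pos : 0 < 1 - softmax (θ 0) rprime := by linarith [hπ'lt1 0]
  -- single-term and two-term lower bounds for A
  have hAge : ∀ s, softmax (θ s) rprime * p rprime + softmax (θ s) rstar * p rstar ≤ A s := by
    intro s
    have hmem : rstar ∈ Finset.univ.erase rprime :=
      Finset.mem_erase.mpr ⟨hne.symm, Finset.mem_univ _⟩
    have e1 : A s = softmax (θ s) rprime * p rprime
        + ∑ j ∈ Finset.univ.erase rprime, softmax (θ s) j * p j := by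
      rw [hAdef]
      exact (Finset.add_sum_erase _ _ (Finset.mem_univ rprime)).symm
    have e2 : ∑ j ∈ Finset.univ.erase rprime, softmax (θ s) j * p j
        = softmax (θ s) rstar * p rstar
          + ∑ j ∈ (Finset.univ.erase rprime).erase rstar, softmax (θ s) j * p j :=
      (Finset.add_sum_erase _ _ hmem).symm
    have e3 : 0 ≤ ∑ j ∈ (Finset.univ.erase rprime).erase rstar, softmax (θ s) j * p j :=
      Finset.sum_nonneg fun j _ => mul_nonneg (hπpos s j).le (hp j).1
    rw [e1, e2]
    linarith
  -- derivative of A and monotonicity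
  have hAderiv : ∀ s, 0 ≤ s →
      HasDerivAt A (∑ j, (softmax (θ s) j)^2 * (p j - A s)^2) s := by
    intro s hs
    have hθ : ∀ i, HasDerivAt (fun u => θ u i) (D s i) s := fun i => hflow s hs i
    have hsm : ∀ j, HasDerivAt (fun u => softmax (θ u) j)
        (softmax (θ s) j * (D s j - ∑ k, softmax (θ s) k * D s k)) s :=
      fun j => hasDerivAt_softmax hθ j
    have hsum : HasDerivAt A
        (∑ j, (softmax (θ s) j * (D s j - ∑ k, softmax (θ s) k * D s k)) * p j) s := by
      rw [hAdef]
      exact HasDerivAt.fun_sum (fun j _ => (hsm j).mul_const (p j))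
    convert hsum using 1
    simp only [hDdef]
    set q := softmax (θ s) with hq
    set K := ∑ k, q k * (q k * (p k - A s)) with hK
    have e1 : ∀ j ∈ Finset.univ, (q j * (q j * (p j - A s) - K)) * p j
        = q j^2 * (p j - A s) * p j - (q j * p j) * K := by intro j _; ring
    have e2 : ∀ j ∈ Finset.univ, q j^2 * (p j - A s)^2
        = q j^2 * (p j - A s) * p j - (q j^2 * (p j - A s)) * A s := by intro j _; ring
    rw [Finset.sum_congr rfl e2, Finset.sum_congr rfl e1, Finset.sum_sub_distrib,
      Finset.sum_sub_distrib, ← Finset.sum_mul, ← Finset.sum_mul]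
    have hAq : ∑ j, q j * p j = A s := rfl
    have hKq : ∑ j, q j^2 * (p j - A s) = K := by
      rw [hK]; exact Finset.sum_congr rfl fun j _ => by ring
    rw [hAq, hKq, mul_comm]
  have hAmono : MonotoneOn A (Set.Ici (0:ℝ)) := by
    refine monotoneOn_Ici_of_hasDerivAt (f' := fun s => ∑ j, (softmax (θ s) j)^2 * (p j - A s)^2)
      (fun s hs => hAderiv s hs) (fun s _ => Finset.sum_nonneg fun j _ => by positivity)
  -- γ as sum of exponential ratios
  have hγG : γ = ∑ r ∈ Finset.univ.erase rprime, Real.exp (θ 0 r - θ 0 rstar) := by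
    rw [hγ]
    refine Finset.sum_congr rfl fun r _ => ?_
    rw [div_eq_iff (hπpos 0 rstar).ne', mul_comm]
    exact (softmax_mul_exp_sub (θ 0) rstar r).symm
  have hrstarmem : rstar ∈ Finset.univ.erase rprime :=
    Finset.mem_erase.mpr ⟨hne.symm, Finset.mem_univ _⟩
  have hγ1 : 1 ≤ γ := by
    rw [hγG]
    calc (1:ℝ) = Real.exp (θ 0 rstar - θ 0 rstar) := by simp
      _ ≤ ∑ r ∈ Finset.univ.erase rprime, Real.exp (θ 0 r - θ 0 rstar) :=
        Finset.single_le_sum (f := fun r => Real.exp (θ 0 r - θ 0 rstar))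
          (fun r _ => (Real.exp_pos _).le) hrstarmem
  have hγpos : 0 < γ := lt_of_lt_of_le one_pos hγ1
  -- regime condition at time 0 gives C₁γ > 1 and T₀ > 0
  have hGw : ∀ s, softmax (θ s) rstar *
      (∑ r ∈ Finset.univ.erase rprime, Real.exp (θ s r - θ s rstar))
      = 1 - softmax (θ s) rprime := by
    intro s
    rw [Finset.mul_sum]
    rw [Finset.sum_congr rfl (fun r _ => softmax_mul_exp_sub (θ s) rstar r)]
    have h2 := Finset.add_sum_erase Finset.univ (fun j => softmax (θ s) j)
      (Finset.mem_univ rprime)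
    have h3 := hsum1 s
    linarith
  have hregime0 : ∀ s, A s < p rprime →
      p rstar < p rprime * ∑ r ∈ Finset.univ.erase rprime, Real.exp (θ s r - θ s rstar) := by
    intro s hAs
    have h1 : softmax (θ s) rstar * p rstar
        < p rprime * (1 - softmax (θ s) rprime) := by
      have := hAge s; nlinarith
    have h2 : softmax (θ s) rstar * p rstar < softmax (θ s) rstar *
        (p rprime * ∑ r ∈ Finset.univ.erase rprime, Real.exp (θ s r - θ s rstar)) := by
      rw [mul_left_comm, hGw s]; exact h1
    exact (mul_lt_mul_iff_right₀ (hπpos s rstar)).mp h2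
  have hC₁γ : 1 < C₁ * γ := by
    have h0 := hregime0 0 hinit_lt
    rw [← hγG] at h0
    rw [hC₁, div_mul_eq_mul_div, lt_div_iff₀ hΔpos, one_mul]
    rw [hΔ]; linarith
  have hcdef : (0:ℝ) < Δ / (2 * γ) := by positivity
  have hexp : 2 * C₂ * γ = (Δ / (2 * γ))⁻¹ := by
    rw [hC₂]; field_simp
  have hexppos : 0 < 2 * C₂ * γ := by rw [hexp]; positivity
  have hrpow1 : 1 < (C₁ * γ) ^ (2 * C₂ * γ) :=
    (Real.one_lt_rpow_iff_of_pos (by linarith)).mpr (Or.inl ⟨hC₁γ, hexppos⟩)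
  have hT₀pos : 0 < T₀ := by
    rw [hT₀]
    apply mul_pos
    · rw [one_div]; exact inv_pos.mpr (by linarith)
    · linarith
  intro t ht
  refine ⟨?_, fun r h1 h2 => hsecond r h1 h2⟩
  by_contra hcon'
  push_neg at hcon'
  have hcon : A t < p rprime := hcon'
  have htpos : 0 < t := lt_of_lt_of_le hT₀pos ht
  -- regime bounds on [0, t]
  have hAlt : ∀ s ∈ Set.Icc (0:ℝ) t, A s < p rprime := by
    intro s hs
    exact lt_of_le_of_lt (hAmono (Set.mem_Ici.mpr hs.1) (Set.mem_Ici.mpr htpos.le) hs.2) hcon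
  have hA0le : ∀ s ∈ Set.Icc (0:ℝ) t, A 0 ≤ A s := by
    intro s hs
    exact hAmono (Set.mem_Ici.mpr le_rfl) (Set.mem_Ici.mpr hs.1) hs.1
  have hmem0 : (0:ℝ) ∈ Set.Icc (0:ℝ) t := ⟨le_rfl, htpos.le⟩
  -- the function w = 1 - π_{r'}
  set w : ℝ → ℝ := fun s => 1 - softmax (θ s) rprime with hwdef
  have hws : ∀ s, w s = 1 - softmax (θ s) rprime := fun s => rfl
  have hwpos : ∀ s, 0 < w s := fun s => by rw [hws]; linarith [hπ'lt1 s]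
  have hwle1 : ∀ s, w s ≤ 1 := fun s => by rw [hws]; linarith [hπpos s rprime]
  have hwderiv : ∀ s, 0 ≤ s → HasDerivAt w
      (-(softmax (θ s) rprime * (D s rprime - ∑ k, softmax (θ s) k * D s k))) s := by
    intro s hs
    have hθ : ∀ i, HasDerivAt (fun u => θ u i) (D s i) s := fun i => hflow s hs i
    exact (hasDerivAt_softmax hθ rprime).const_sub 1
  -- the Riccati-type bound : π'(D' - B) ≤ 2 w²
  have hwd_bound : ∀ s ∈ Set.Icc (0:ℝ) t,
      softmax (θ s) rprime * (D s rprime - ∑ k, softmax (θ s) k * D s k)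
        ≤ 2 * (w s)^2 := by
    intro s hs
    have hAs := hAlt s hs
    have hq'pos := hπpos s rprime
    have hq'lt1 := hπ'lt1 s
    have hqstpos := hπpos s rstar
    -- split B
    have hBsplit : (∑ k, softmax (θ s) k * D s k)
        = softmax (θ s) rprime * D s rprime + softmax (θ s) rstar * D s rstar
          + ∑ k ∈ (Finset.univ.erase rprime).erase rstar, softmax (θ s) k * D s k := by
      rw [← Finset.add_sum_erase _ _ (Finset.mem_univ rprime),
        ← Finset.add_sum_erase _ _ hrstarmem, add_assoc]
    set X := ∑ k ∈ (Finset.univ.erase rprime).erase rstar, softmax (θ s) k * D s k with hXdef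
    have hothsum : ∑ k ∈ (Finset.univ.erase rprime).erase rstar, softmax (θ s) k ≤ w s := by
      have h1 := Finset.add_sum_erase Finset.univ (fun j => softmax (θ s) j)
        (Finset.mem_univ rprime)
      have h2 := Finset.add_sum_erase (Finset.univ.erase rprime)
        (fun j => softmax (θ s) j) hrstarmem
      have h3 := hsum1 s
      rw [hws]
      linarith
    have hXub : X ≤ 0 := by
      apply Finset.sum_nonpos
      intro k hk
      obtain ⟨hk1, hk2⟩ := Finset.mem_erase.mp hk
      obtain ⟨hk3, _⟩ := Finset.mem_erase.mp hk2
      have hpk : p k < A s := lt_of_lt_of_le (hinit_gt k hk1 hk3) (hA0le s hs)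
      have : D s k = softmax (θ s) k * (p k - A s) := rfl
      rw [this]
      apply mul_nonpos_of_nonneg_of_nonpos (hπpos s k).le
      apply mul_nonpos_of_nonneg_of_nonpos (hπpos s k).le
      linarith
    have hXlb : -((w s)^2) ≤ X := by
      have h1 : -X ≤ (w s)^2 := by
        have e1 : -X = ∑ k ∈ (Finset.univ.erase rprime).erase rstar,
            softmax (θ s) k * (softmax (θ s) k * (A s - p k)) := by
          rw [hXdef, ← Finset.sum_neg_distrib]
          exact Finset.sum_congr rfl fun k _ => by
            show -(softmax (θ s) k * (softmax (θ s) k * (p k - A s))) = _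
            ring
        rw [e1]
        calc ∑ k ∈ (Finset.univ.erase rprime).erase rstar,
              softmax (θ s) k * (softmax (θ s) k * (A s - p k))
            ≤ ∑ k ∈ (Finset.univ.erase rprime).erase rstar, (softmax (θ s) k)^2 := by
              apply Finset.sum_le_sum
              intro k hk
              have hAs1 : A s - p k ≤ 1 := by
                have := (hp k).1; linarith [hp'le1]
              have := hπpos s k
              nlinarith
          _ ≤ (∑ k ∈ (Finset.univ.erase rprime).erase rstar, softmax (θ s) k)^2 :=
              sq_sum_le _ _ (fun k _ => (hπpos s k).le)
          _ ≤ (w s)^2 := by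
              have h0 : 0 ≤ ∑ k ∈ (Finset.univ.erase rprime).erase rstar, softmax (θ s) k :=
                Finset.sum_nonneg fun k _ => (hπpos s k).le
              nlinarith [hothsum]
      linarith
    have hu : D s rprime = softmax (θ s) rprime * (p rprime - A s) := rfl
    have huw : p rprime - A s ≤ p rprime * w s := by
      have h1 := hAge s
      have h2 : 0 ≤ softmax (θ s) rstar * p rstar :=
        mul_nonneg hqstpos.le (hp rstar).1
      rw [hws]
      nlinarith
    have hupos : 0 < p rprime - A s := by linarith
    have hDst : 0 ≤ softmax (θ s) rstar * D s rstar := by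
      have : D s rstar = softmax (θ s) rstar * (p rstar - A s) := rfl
      rw [this]
      have h4 : A s < p rstar := by
        have := hmax rprime hne; linarith
      exact mul_nonneg hqstpos.le (mul_nonneg hqstpos.le (by linarith))
    rw [hBsplit, hu]
    have hkey : softmax (θ s) rprime * (softmax (θ s) rprime * (p rprime - A s) -
        (softmax (θ s) rprime * (softmax (θ s) rprime * (p rprime - A s))
          + softmax (θ s) rstar * D s rstar + X))
        = (softmax (θ s) rprime)^2 * (p rprime - A s) * w s
          - softmax (θ s) rprime * (softmax (θ s) rstar * D s rstar)
          - softmax (θ s) rprime * X := by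
      rw [hws]; ring
    rw [hkey]
    have hq2 : (softmax (θ s) rprime)^2 ≤ 1 := by nlinarith
    have huwpos : 0 ≤ (p rprime - A s) * w s :=
      mul_nonneg hupos.le (hwpos s).le
    have ha : (softmax (θ s) rprime)^2 * (p rprime - A s) * w s
        ≤ (p rprime - A s) * w s := by nlinarith [hq2, huwpos]
    have hd : (p rprime - A s) * w s ≤ (w s)^2 := by nlinarith [hwpos s, hp'le1]
    have hb : 0 ≤ softmax (θ s) rprime * (softmax (θ s) rstar * D s rstar) :=
      mul_nonneg hq'pos.le hDst
    have hc : -(softmax (θ s) rprime * X) ≤ (w s)^2 := by nlinarith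
    linarith
  -- the comparison function φ = w⁻¹ - 2s is antitone
  have hwinv : ∀ s ∈ Set.Icc (0:ℝ) t, (w s)⁻¹ ≤ (w 0)⁻¹ + 2 * s := by
    have hφanti : AntitoneOn (fun s => (w s)⁻¹ - 2 * s) (Set.Icc (0:ℝ) t) := by
      apply antitoneOn_Icc_of_hasDerivAt (f' := fun s =>
        -(-(softmax (θ s) rprime * (D s rprime - ∑ k, softmax (θ s) k * D s k))) / (w s)^2
          - 2)
      · intro s hs
        have h1 := ((hwderiv s hs.1).inv (hwpos s).ne')
        have h2 : HasDerivAt (fun u : ℝ => 2 * u) 2 s := by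
          simpa using (hasDerivAt_id s).const_mul (2:ℝ)
        exact h1.sub h2
      · intro s hs
        have hb := hwd_bound s (Set.mem_Icc_of_Ioo hs)
        have hw2 : 0 < (w s)^2 := pow_pos (hwpos s) 2
        rw [neg_neg, sub_nonpos, div_le_iff₀ hw2]
        linarith
    intro s hs
    have := hφanti hmem0 hs hs.1
    simp only at this
    linarith
  -- linear-growth majorant M
  set M : ℝ → ℝ := fun s => (w 0)⁻¹ + 2 * s with hMdef
  have hMs : ∀ s : ℝ, M s = (w 0)⁻¹ + 2 * s := fun s => rfl
  have hMpos : ∀ s : ℝ, 0 ≤ s → 0 < M s := by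
    intro s hs
    rw [hMs]
    have := inv_pos.mpr (hwpos 0)
    linarith
  -- likelihood ratios for suboptimal responses are antitone
  have hHanti : ∀ r, r ∈ (Finset.univ.erase rprime).erase rstar →
      AntitoneOn (fun s => Real.exp (θ s r - θ s rstar)) (Set.Icc (0:ℝ) t) := by
    intro r hr
    obtain ⟨hr1, hr2⟩ := Finset.mem_erase.mp hr
    obtain ⟨hr3, _⟩ := Finset.mem_erase.mp hr2
    apply antitoneOn_Icc_of_hasDerivAt
      (f' := fun s => Real.exp (θ s r - θ s rstar) * (D s r - D s rstar))
    · intro s hs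
      exact ((hflow s hs.1 r).sub (hflow s hs.1 rstar)).exp
    · intro s hs
      have hsI : s ∈ Set.Icc (0:ℝ) t := Set.mem_Icc_of_Ioo hs
      have hpk : p r < A s := lt_of_lt_of_le (hinit_gt r hr1 hr3) (hA0le s hsI)
      have hDr : D s r ≤ 0 :=
        mul_nonpos_of_nonneg_of_nonpos (hπpos s r).le (by linarith)
      have hDst : 0 ≤ D s rstar := by
        have h4 : A s < p rstar := by
          have := hmax rprime hne; linarith [hAlt s hsI]
        exact mul_nonneg (hπpos s rstar).le (by linarith)
      exact mul_nonpos_of_nonneg_of_nonpos (Real.exp_pos _).le (by linarith)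
  have hGle : ∀ s ∈ Set.Icc (0:ℝ) t,
      (∑ r ∈ Finset.univ.erase rprime, Real.exp (θ s r - θ s rstar)) ≤ γ := by
    intro s hs
    rw [hγG]
    apply Finset.sum_le_sum
    intro r hr
    by_cases hrr : r = rstar
    · subst hrr; simp
    · exact hHanti r (Finset.mem_erase.mpr ⟨hrr, hr⟩) hmem0 hs hs.1
  have hπst_lb : ∀ s ∈ Set.Icc (0:ℝ) t, 1 ≤ softmax (θ s) rstar * (γ * M s) := by
    intro s hs
    have h2 : (w s)⁻¹ ≤ M s := by rw [hMs]; exact hwinv s hs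
    have h1 : 1 ≤ w s * M s := by
      calc (1:ℝ) = w s * (w s)⁻¹ := (mul_inv_cancel₀ (hwpos s).ne').symm
        _ ≤ w s * M s := mul_le_mul_of_nonneg_left h2 (hwpos s).le
    have h3 : w s ≤ softmax (θ s) rstar * γ := by
      rw [hws]
      calc 1 - softmax (θ s) rprime
          = softmax (θ s) rstar * ∑ r ∈ Finset.univ.erase rprime,
              Real.exp (θ s r - θ s rstar) := (hGw s).symm
        _ ≤ softmax (θ s) rstar * γ :=
            mul_le_mul_of_nonneg_left (hGle s hs) (hπpos s rstar).le
    have h4 : w s * M s ≤ softmax (θ s) rstar * γ * M s :=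
      mul_le_mul_of_nonneg_right h3 (hMpos s hs.1).le
    calc (1:ℝ) ≤ w s * M s := h1
      _ ≤ softmax (θ s) rstar * γ * M s := h4
      _ = softmax (θ s) rstar * (γ * M s) := by ring
  -- the aggregated suboptimal ratio g
  set g : ℝ → ℝ := fun s => ∑ r ∈ (Finset.univ.erase rprime).erase rstar,
    Real.exp (θ s r - θ s rstar) with hgdef
  have hgs : ∀ s, g s = ∑ r ∈ (Finset.univ.erase rprime).erase rstar,
      Real.exp (θ s r - θ s rstar) := fun s => rfl
  have hgnonneg : ∀ s, 0 ≤ g s := fun s =>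
    Finset.sum_nonneg fun r _ => (Real.exp_pos _).le
  have hgG : ∀ s, (∑ r ∈ Finset.univ.erase rprime, Real.exp (θ s r - θ s rstar))
      = 1 + g s := by
    intro s
    rw [← Finset.add_sum_erase _ _ hrstarmem, hgs]
    simp
  set c : ℝ := Δ / (2 * γ) with hcdef2
  have hcpos : 0 < c := hcdef
  have hgderiv : ∀ s, 0 ≤ s → HasDerivAt g
      (∑ r ∈ (Finset.univ.erase rprime).erase rstar,
        Real.exp (θ s r - θ s rstar) * (D s r - D s rstar)) s := by
    intro s hs
    rw [hgdef]
    exact HasDerivAt.fun_sum fun r _ => ((hflow s hs r).sub (hflow s hs rstar)).exp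
  have hψanti : AntitoneOn (fun s => g s * (M s) ^ c) (Set.Icc (0:ℝ) t) := by
    apply antitoneOn_Icc_of_hasDerivAt (f' := fun s =>
      (∑ r ∈ (Finset.univ.erase rprime).erase rstar,
        Real.exp (θ s r - θ s rstar) * (D s r - D s rstar)) * (M s) ^ c
        + g s * (2 * c * (M s) ^ (c - 1)))
    · intro s hs
      have hM : HasDerivAt M 2 s := by
        have := ((hasDerivAt_id s).const_mul (2:ℝ)).const_add ((w 0)⁻¹)
        simpa [hMdef] using this
      exact (hgderiv s hs.1).mul (hM.rpow_const (Or.inl (hMpos s hs.1).ne'))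
    · intro s hs
      have hsI : s ∈ Set.Icc (0:ℝ) t := Set.mem_Icc_of_Ioo hs
      have hMp := hMpos s hsI.1
      have hMc : 0 < (M s) ^ c := Real.rpow_pos_of_pos hMp c
      have hgd_le : (∑ r ∈ (Finset.univ.erase rprime).erase rstar,
          Real.exp (θ s r - θ s rstar) * (D s r - D s rstar))
            ≤ -(2 * c / M s) * g s := by
        have hterm : ∀ r ∈ (Finset.univ.erase rprime).erase rstar,
            Real.exp (θ s r - θ s rstar) * (D s r - D s rstar)
              ≤ -(2 * c / M s) * Real.exp (θ s r - θ s rstar) := by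
          intro r hr
          obtain ⟨hr1, hr2⟩ := Finset.mem_erase.mp hr
          obtain ⟨hr3, _⟩ := Finset.mem_erase.mp hr2
          have hpk : p r < A s := lt_of_lt_of_le (hinit_gt r hr1 hr3) (hA0le s hsI)
          have hDr : D s r ≤ 0 :=
            mul_nonpos_of_nonneg_of_nonpos (hπpos s r).le (by linarith)
          have hDst : Δ * softmax (θ s) rstar ≤ D s rstar := by
            have h5 : Δ ≤ p rstar - A s := by
              rw [hΔ]; linarith [hAlt s hsI]
            calc Δ * softmax (θ s) rstar
                ≤ (p rstar - A s) * softmax (θ s) rstar :=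
                  mul_le_mul_of_nonneg_right h5 (hπpos s rstar).le
              _ = D s rstar := mul_comm _ _
          have hrate : 2 * c / M s ≤ Δ * softmax (θ s) rstar := by
            have h6 := hπst_lb s hsI
            rw [div_le_iff₀ hMp]
            have h7 : 2 * c = Δ / γ := by rw [hcdef2]; field_simp
            rw [h7, div_le_iff₀ hγpos]
            nlinarith [hΔpos, h6]
          have hexppos' := Real.exp_pos (θ s r - θ s rstar)
          have h10 : D s r - D s rstar ≤ -(2 * c / M s) := by linarith
          calc Real.exp (θ s r - θ s rstar) * (D s r - D s rstar)
              ≤ Real.exp (θ s r - θ s rstar) * (-(2 * c / M s)) :=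
                mul_le_mul_of_nonneg_left h10 hexppos'.le
            _ = -(2 * c / M s) * Real.exp (θ s r - θ s rstar) := mul_comm _ _
        calc (∑ r ∈ (Finset.univ.erase rprime).erase rstar,
              Real.exp (θ s r - θ s rstar) * (D s r - D s rstar))
            ≤ ∑ r ∈ (Finset.univ.erase rprime).erase rstar,
              -(2 * c / M s) * Real.exp (θ s r - θ s rstar) :=
              Finset.sum_le_sum hterm
          _ = -(2 * c / M s) * g s := by
              rw [hgs]; exact (Finset.mul_sum _ _ _).symm
      have hrw : (M s) ^ (c - 1) = (M s) ^ c / M s := by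
        rw [Real.rpow_sub hMp, Real.rpow_one]
      rw [hrw]
      have h8 := mul_le_mul_of_nonneg_right hgd_le hMc.le
      have h9 : -(2 * c / M s) * g s * (M s)^c
          + g s * (2 * c * ((M s)^c / M s)) = 0 := by
        field_simp
        ring
      linarith
  -- endgame
  have hT₀mem : T₀ ∈ Set.Icc (0:ℝ) t := ⟨hT₀pos.le, ht⟩
  have hψle : g T₀ * (M T₀) ^ c ≤ g 0 * (M 0) ^ c := hψanti hmem0 hT₀mem hT₀pos.le
  have hg0 : g 0 = γ - 1 := by
    have h1 := hgG 0
    rw [← hγG] at h1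
    linarith
  have hM0 : M 0 = (w 0)⁻¹ := by rw [hMs]; ring
  have hMT₀ : M T₀ = (w 0)⁻¹ * (C₁ * γ) ^ (2 * C₂ * γ) := by
    rw [hMs, hT₀, hws]
    have hne0 : (2 : ℝ) - 2 * softmax (θ 0) rprime ≠ 0 := by
      have h0 : (0:ℝ) < 2 - 2 * softmax (θ 0) rprime := by linarith
      exact h0.ne'
    field_simp
    ring
  have hC₁γpos : (0:ℝ) < C₁ * γ := by linarith
  have hMT₀c : (M T₀) ^ c = ((w 0)⁻¹) ^ c * (C₁ * γ) := by
    rw [hMT₀, Real.mul_rpow (inv_pos.mpr (hwpos 0)).le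
      (Real.rpow_nonneg hC₁γpos.le _)]
    congr 1
    rw [← Real.rpow_mul hC₁γpos.le, hexp, inv_mul_cancel₀ hcpos.ne', Real.rpow_one]
  have hMc0 : 0 < ((w 0)⁻¹) ^ c := Real.rpow_pos_of_pos (inv_pos.mpr (hwpos 0)) c
  have hgT₀C : g T₀ * (C₁ * γ) ≤ γ - 1 := by
    rw [hMT₀c, hg0, hM0] at hψle
    nlinarith [hMc0, hψle]
  have hreg := hregime0 T₀ (hAlt T₀ hT₀mem)
  rw [hgG T₀] at hreg
  have hgT₀lb : Δ / p rprime < g T₀ := by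
    rw [div_lt_iff₀ hp'pos, hΔ]
    nlinarith [hreg]
  have e : γ = (Δ / p rprime) * (C₁ * γ) := by
    rw [hC₁]; field_simp
  have hfin : γ < g T₀ * (C₁ * γ) :=
    calc γ = (Δ / p rprime) * (C₁ * γ) := e
      _ < g T₀ * (C₁ * γ) := mul_lt_mul_of_pos_right hgT₀lb hC₁γpos
  linarith
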